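/- Let Ω ⊆ ℝ^d be bounded, W ⊂ ℤ finite, α ∈ (0,1), η > 0, Δ > 0. Let v^n → v strictly in ℱ (i.e., v^n → v in L^1 and R_α(v^n) → R_α(v)) and g^n ⇀ g weakly in L²(Ω). If w^n ∈ ℱ converge to w ∈ ℱ in L^1(Ω) with sup_n P_α((w^n)^{-1}({w_i})) < ∞ for each i, and ‖w^n − v^n‖_{L^1} ≤ Δ for all n, then ‖w − v‖_{L^1} ≤ Δ and (g, w − v)_{L²} + η R_α(w) − η R_α(v) ≤ liminf_n [(g^n, w^n − v^n)_{L²} + η R_α(w^n) − η R_α(v^n)]. -/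

import Mathlib

open MeasureTheory Filter
open scoped ENNReal NNReal symmDiff

/-- The fractional perimeter `P_α(E) = 2 ∫_E ∫_{E^c} |x-y|^{-(d+α)} dx dy`,
with values in `[0,∞]`. -/
noncomputable def fracPer (d : ℕ) (α : ℝ) (E : Set (EuclideanSpace ℝ (Fin d))) : ℝ≥0∞ :=
  2 * ∫⁻ x in E, ∫⁻ y in Eᶜ, ENNReal.ofReal (‖x - y‖ ^ (-((d : ℝ) + α)))


/-- Feasibility: `w` is measurable, vanishes outside `Ω` and takes values in
`W = {w_1, …, w_M}` a.e. on `Ω`. -/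
def Feasible (d M : ℕ) (Ω : Set (EuclideanSpace ℝ (Fin d))) (wv : Fin M → ℤ)
    (w : EuclideanSpace ℝ (Fin d) → ℝ) : Prop :=
  Measurable w ∧ (∀ x, x ∉ Ω → w x = 0) ∧
    ∀ᵐ x ∂(volume.restrict Ω), ∃ i, w x = (wv i : ℝ)

/-- The fractional-perimeter regularizer
`R_α(w) = (1−α) Σ_i |w_i| P_α(w⁻¹({w_i}))`. -/
noncomputable def Reg (d M : ℕ) (α : ℝ) (wv : Fin M → ℤ)
    (w : EuclideanSpace ℝ (Fin d) → ℝ) : ℝ≥0∞ :=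
  ∑ i, ((wv i).natAbs : ℝ≥0∞) * ENNReal.ofReal (1 - α) * fracPer d α (w ⁻¹' {(wv i : ℝ)})

open scoped Topology

/-!
The first claim passes to the limit by the triangle inequality in `L¹`. For the second, the
three terms are treated separately and recombined by superadditivity of `liminf` in `EReal`.
Feasible functions are uniformly bounded, so `L¹`-convergence upgrades to `L²`-convergence, and
since a weakly convergent sequence is norm-bounded (Banach–Steinhaus), `(gⁿ, wⁿ - vⁿ)` converges
to `(g, w - v)`. For the lower semicontinuity of `R_α`, write `R_α` as one integral over
`ℝᵈ × ℝᵈ`. Along a subsequence `wⁿ → w` a.e., and as the values lie in the finite set `W ∪ {0}`,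
even `wⁿ(x) = w(x)` eventually, so the integrands converge a.e. and Fatou's lemma applies; since
every subsequence has such a further subsequence, the bound holds along the whole sequence.
-/

theorem eventually_eq_of_tendsto_of_mem_finite {X ι : Type*} [TopologicalSpace X] [T1Space X]
    {l : Filter ι} {S : Set X} (hS : S.Finite) {a : ι → X} {b : X} (ha : ∀ᶠ n in l, a n ∈ S)
    (h : Tendsto a l (𝓝 b)) : ∀ᶠ n in l, a n = b := by
  have hb : (S \ {b})ᶜ ∈ 𝓝 b :=
    (hS.sdiff.isClosed.isOpen_compl).mem_nhds fun hb => hb.2 rfl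
  filter_upwards [ha, h hb] with n hnS hn
  by_contra hne
  exact hn ⟨hnS, hne⟩

theorem le_liminf_of_forall_subseq {α : Type*} [CompleteLinearOrder α] {u : ℕ → α} {a : α}
    (h : ∀ φ : ℕ → ℕ, StrictMono φ → ∃ ψ : ℕ → ℕ, StrictMono ψ ∧ a ≤ liminf (u ∘ φ ∘ ψ) atTop) :
    a ≤ liminf u atTop := by
  refine (le_liminf_iff).2 fun y hy => ?_
  by_contra hfreq
  obtain ⟨φ, hφ, hφy⟩ := extraction_of_frequently_atTop (not_eventually.1 hfreq)
  obtain ⟨ψ, -, hψ⟩ := h φ hφ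
  exact (hy.trans_le hψ).not_ge
    (liminf_le_of_frequently_le (.of_forall fun k => not_lt.1 (hφy (ψ k))))

theorem ContinuousLinearMap.tendsto_apply_of_tendsto_pointwise {𝕜 E F : Type*}
    [NontriviallyNormedField 𝕜] [NormedAddCommGroup E] [NormedSpace 𝕜 E] [CompleteSpace E]
    [NormedAddCommGroup F] [NormedSpace 𝕜 F] {T : ℕ → E →L[𝕜] F} {L : E → F}
    (hT : ∀ x, Tendsto (fun n => T n x) atTop (𝓝 (L x))) {x : ℕ → E} {x₀ : E}
    (hx : Tendsto x atTop (𝓝 x₀)) : Tendsto (fun n => T n (x n)) atTop (𝓝 (L x₀)) := by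
  obtain ⟨C, hC⟩ : ∃ C, ∀ n, ‖T n‖ ≤ C := banach_steinhaus fun y => by
    obtain ⟨C, hC⟩ := (hT y).norm.bddAbove_range
    exact ⟨C, fun n => hC ⟨n, rfl⟩⟩
  have hsmall : Tendsto (fun n => T n (x n - x₀)) atTop (𝓝 0) := by
    refine squeeze_zero_norm (fun n => ((T n).le_opNorm _).trans
      (mul_le_mul_of_nonneg_right (hC n) (norm_nonneg _))) ?_
    simpa using (tendsto_iff_norm_sub_tendsto_zero.1 hx).const_mul C
  simpa using hsmall.add (hT x₀)

theorem EReal.le_liminf_add_sub {a : ℕ → ℝ} {a₀ : ℝ} {b c : ℕ → ℝ≥0∞} {b₀ c₀ : ℝ≥0∞}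
    (ha : Tendsto a atTop (𝓝 a₀)) (hb : b₀ ≤ liminf b atTop) (hc : Tendsto c atTop (𝓝 c₀)) :
    (a₀ : EReal) + b₀ - c₀ ≤ liminf (fun n => (a n : EReal) + b n - c n) atTop := by
  have ha' : liminf (fun n => (a n : EReal)) atTop = a₀ :=
    (continuous_coe_real_ereal.tendsto a₀ |>.comp ha).liminf_eq
  have hb' : (b₀ : EReal) ≤ liminf (fun n => (b n : EReal)) atTop :=
    calc (b₀ : EReal) ≤ (liminf b atTop : ℝ≥0∞) := EReal.coe_ennreal_le_coe_ennreal_iff.2 hb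
      _ = liminf (fun n => (b n : EReal)) atTop :=
        EReal.coe_ennreal_strictMono.monotone.map_liminf_of_continuousAt b
          continuous_coe_ennreal_ereal.continuousAt
  have hc' : liminf (fun n => -(c n : EReal)) atTop = -c₀ :=
    ((continuous_neg.comp continuous_coe_ennreal_ereal).tendsto c₀ |>.comp hc).liminf_eq
  calc (a₀ : EReal) + b₀ - c₀
      ≤ liminf (fun n => (a n : EReal)) atTop + liminf (fun n => (b n : EReal)) atTop
        + liminf (fun n => -(c n : EReal)) atTop := by
        rw [ha', hc', sub_eq_add_neg]
        gcongr
    _ ≤ liminf (fun n => (a n : EReal) + b n) atTop + liminf (fun n => -(c n : EReal)) atTop :=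
        add_le_add_left EReal.le_liminf_add _
    _ ≤ liminf (fun n => (a n : EReal) + b n - c n) atTop := by
        simp only [sub_eq_add_neg]
        exact EReal.le_liminf_add

namespace MeasureTheory

variable {α : Type*} [MeasurableSpace α] {μ : Measure α}

theorem TendstoInMeasure.exists_subseq_ae_eventually_eq {E : Type*} [MetricSpace E]
    {f : ℕ → α → E} {g : α → E} {S : Set E} (hS : S.Finite) (hf : ∀ n, ∀ᵐ x ∂μ, f n x ∈ S)
    (hfg : TendstoInMeasure μ f atTop g) :
    ∃ ns : ℕ → ℕ, StrictMono ns ∧ ∀ᵐ x ∂μ, ∀ᶠ k in atTop, f (ns k) x = g x := by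
  obtain ⟨ns, hns, hae⟩ := hfg.exists_seq_tendsto_ae
  refine ⟨ns, hns, ?_⟩
  filter_upwards [hae, ae_all_iff.2 hf] with x hx hxS
  exact eventually_eq_of_tendsto_of_mem_finite hS (.of_forall fun k => hxS (ns k)) hx

theorem lintegral_ofReal_abs_sub_eq_eLpNorm (f g : α → ℝ) :
    ∫⁻ x, ENNReal.ofReal |f x - g x| ∂μ = eLpNorm (f - g) 1 μ := by
  simp [eLpNorm_one_eq_lintegral_enorm, Real.enorm_eq_ofReal_abs]

section Triangle

variable {E : Type*} [NormedAddCommGroup E] {p : ℝ≥0∞} {f g : ℕ → α → E} {f₀ g₀ : α → E}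

theorem tendsto_eLpNorm_sub_sub (hp : 1 ≤ p) (hf : ∀ n, AEStronglyMeasurable (f n) μ)
    (hf₀ : AEStronglyMeasurable f₀ μ) (hg : ∀ n, AEStronglyMeasurable (g n) μ)
    (hg₀ : AEStronglyMeasurable g₀ μ)
    (hff : Tendsto (fun n => eLpNorm (f n - f₀) p μ) atTop (𝓝 0))
    (hgg : Tendsto (fun n => eLpNorm (g n - g₀) p μ) atTop (𝓝 0)) :
    Tendsto (fun n => eLpNorm ((f n - g n) - (f₀ - g₀)) p μ) atTop (𝓝 0) := by
  refine tendsto_of_tendsto_of_tendsto_of_le_of_le tendsto_const_nhds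
    (by simpa using hff.add hgg) (fun _ => zero_le) fun n => ?_
  rw [sub_sub_sub_comm]
  exact eLpNorm_sub_le ((hf n).sub hf₀) ((hg n).sub hg₀) hp

theorem eLpNorm_sub_le_of_tendsto (hp : 1 ≤ p) (hf : ∀ n, AEStronglyMeasurable (f n) μ)
    (hf₀ : AEStronglyMeasurable f₀ μ) (hg : ∀ n, AEStronglyMeasurable (g n) μ)
    (hg₀ : AEStronglyMeasurable g₀ μ)
    (hff : Tendsto (fun n => eLpNorm (f n - f₀) p μ) atTop (𝓝 0))
    (hgg : Tendsto (fun n => eLpNorm (g n - g₀) p μ) atTop (𝓝 0)) {C : ℝ≥0∞}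
    (hC : ∀ n, eLpNorm (f n - g n) p μ ≤ C) : eLpNorm (f₀ - g₀) p μ ≤ C := by
  have hlim := tendsto_eLpNorm_sub_sub hp hf hf₀ hg hg₀ hff hgg
  refine ge_of_tendsto' (by simpa using tendsto_const_nhds.add hlim) fun n =>
    calc eLpNorm (f₀ - g₀) p μ = eLpNorm ((f n - g n) - ((f n - g n) - (f₀ - g₀))) p μ := by
          rw [sub_sub_cancel]
      _ ≤ eLpNorm (f n - g n) p μ + eLpNorm ((f n - g n) - (f₀ - g₀)) p μ :=
          eLpNorm_sub_le ((hf n).sub (hg n)) (((hf n).sub (hg n)).sub (hf₀.sub hg₀)) hp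
      _ ≤ C + eLpNorm ((f n - g n) - (f₀ - g₀)) p μ := add_le_add_left (hC n) _

end Triangle

theorem eLpNorm_two_sq_le {f : α → ℝ} (hf : AEStronglyMeasurable f μ) :
    eLpNorm f 2 μ ^ 2 ≤ eLpNorm f ∞ μ * eLpNorm f 1 μ := by
  have hsq := eLpNorm_norm_rpow (μ := μ) (p := 1) f two_pos
  have hHolder := eLpNorm_le_eLpNorm_top_mul_eLpNorm (μ := μ) 1 f hf (fun a b : ℝ => a * b) 1
    (by simp)
  norm_num [← sq] at hsq hHolder
  rwa [← hsq, eLpNorm_exponent_top]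

theorem tendsto_eLpNorm_two_of_tendsto_eLpNorm_one {f : ℕ → α → ℝ}
    (hf : ∀ n, AEStronglyMeasurable (f n) μ) {C : ℝ≥0∞} (hC : C ≠ ∞)
    (hbd : ∀ n, eLpNorm (f n) ∞ μ ≤ C) (h1 : Tendsto (fun n => eLpNorm (f n) 1 μ) atTop (𝓝 0)) :
    Tendsto (fun n => eLpNorm (f n) 2 μ) atTop (𝓝 0) := by
  have hsq : Tendsto (fun n => eLpNorm (f n) 2 μ ^ 2) atTop (𝓝 0) := by
    have hC1 := ENNReal.Tendsto.const_mul h1 (Or.inr hC)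
    rw [mul_zero] at hC1
    exact tendsto_of_tendsto_of_tendsto_of_le_of_le tendsto_const_nhds hC1 (fun n => zero_le)
      fun n => (eLpNorm_two_sq_le (hf n)).trans (mul_le_mul_left (hbd n) _)
  have hsqrt := hsq.ennrpow_const (1 / 2 : ℝ)
  rw [ENNReal.zero_rpow_of_pos (by norm_num)] at hsqrt
  refine hsqrt.congr fun n => ?_
  rw [← ENNReal.rpow_natCast, ← ENNReal.rpow_mul]
  norm_num

theorem MemLp.inner_toLp_eq_integral_mul {g : α → ℝ} (hg : MemLp g 2 μ) (F : Lp ℝ 2 μ) :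
    inner ℝ (hg.toLp g) F = ∫ x, g x * F x ∂μ := by
  rw [L2.inner_def]
  refine integral_congr_ae ?_
  filter_upwards [hg.coeFn_toLp] with x hx
  rw [hx, Real.inner_apply]

theorem tendsto_integral_mul_of_weak_of_tendsto_eLpNorm {g : ℕ → α → ℝ} {g₀ : α → ℝ}
    {f : ℕ → α → ℝ} {f₀ : α → ℝ} (hg : ∀ n, MemLp (g n) 2 μ)
    (hweak : ∀ h, MemLp h 2 μ →
      Tendsto (fun n => ∫ x, g n x * h x ∂μ) atTop (𝓝 (∫ x, g₀ x * h x ∂μ)))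
    (hf : ∀ n, MemLp (f n) 2 μ) (hf₀ : MemLp f₀ 2 μ)
    (hff : Tendsto (fun n => eLpNorm (f n - f₀) 2 μ) atTop (𝓝 0)) :
    Tendsto (fun n => ∫ x, g n x * f n x ∂μ) atTop (𝓝 (∫ x, g₀ x * f₀ x ∂μ)) := by
  have hLp : Tendsto (fun n => (hf n).toLp (f n)) atTop (𝓝 (hf₀.toLp f₀)) := by
    rw [Lp.tendsto_Lp_iff_tendsto_eLpNorm']
    refine hff.congr fun n => eLpNorm_congr_ae ?_
    filter_upwards [(hf n).coeFn_toLp, hf₀.coeFn_toLp] with x h1 h2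
    simp [h1, h2]
  have hint : ∀ {h : α → ℝ} (hh : MemLp h 2 μ) (k : α → ℝ),
      ∫ x, k x * hh.toLp h x ∂μ = ∫ x, k x * h x ∂μ := fun hh k =>
    integral_congr_ae (by filter_upwards [hh.coeFn_toLp] with x hx; rw [hx])
  have key := ContinuousLinearMap.tendsto_apply_of_tendsto_pointwise
    (T := fun n => innerSL ℝ ((hg n).toLp (g n))) (L := fun F => ∫ x, g₀ x * F x ∂μ)
    (fun F => by simpa [MemLp.inner_toLp_eq_integral_mul] using hweak F (Lp.memLp F)) hLp
  simpa [MemLp.inner_toLp_eq_integral_mul, hint] using key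

end MeasureTheory

local notation "𝔼" d => EuclideanSpace ℝ (Fin d)

section FractionalPerimeter

variable {d M : ℕ} {α : ℝ} {wv : Fin M → ℤ}

noncomputable def fracKernel (d : ℕ) (α : ℝ) (p : (𝔼 d) × 𝔼 d) : ℝ≥0∞ :=
  ENNReal.ofReal (‖p.1 - p.2‖ ^ (-((d : ℝ) + α)))

theorem measurable_fracKernel : Measurable (fracKernel d α) := by
  unfold fracKernel
  fun_prop

theorem measurable_indicator_fracKernel {E : Set (𝔼 d)} (hE : MeasurableSet E) :
    Measurable ((E ×ˢ Eᶜ).indicator (fracKernel d α)) :=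
  measurable_fracKernel.indicator (hE.prod hE.compl)

theorem fracPer_eq_lintegral_prod {E : Set (𝔼 d)} (hE : MeasurableSet E) :
    fracPer d α E = 2 * ∫⁻ p, (E ×ˢ Eᶜ).indicator (fracKernel d α) p ∂volume.prod volume := by
  rw [fracPer, lintegral_indicator (hE.prod hE.compl), ← Measure.prod_restrict,
    lintegral_prod _ measurable_fracKernel.aemeasurable]
  rfl

noncomputable def regDensity (d M : ℕ) (α : ℝ) (wv : Fin M → ℤ) (w : (𝔼 d) → ℝ)
    (p : (𝔼 d) × 𝔼 d) : ℝ≥0∞ :=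
  ∑ i, ((wv i).natAbs : ℝ≥0∞) * ENNReal.ofReal (1 - α) *
    (2 * ((w ⁻¹' {(wv i : ℝ)}) ×ˢ (w ⁻¹' {(wv i : ℝ)})ᶜ).indicator (fracKernel d α) p)

theorem measurable_regDensity {w : (𝔼 d) → ℝ} (hw : Measurable w) :
    Measurable (regDensity d M α wv w) :=
  Finset.measurable_sum _ fun _ _ =>
    ((measurable_indicator_fracKernel (hw (measurableSet_singleton _))).const_mul 2).const_mul _

theorem Reg_eq_lintegral_regDensity {w : (𝔼 d) → ℝ} (hw : Measurable w) :
    Reg d M α wv w = ∫⁻ p, regDensity d M α wv w p ∂volume.prod volume := by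
  have hE : ∀ i, MeasurableSet (w ⁻¹' {(wv i : ℝ)}) := fun i => hw (measurableSet_singleton _)
  have hK := fun i => measurable_indicator_fracKernel (α := α) (hE i)
  unfold Reg regDensity
  rw [lintegral_finsetSum _ fun i _ => ((hK i).const_mul 2).const_mul _]
  refine Finset.sum_congr rfl fun i _ => ?_
  rw [fracPer_eq_lintegral_prod (hE i), lintegral_const_mul _ ((hK i).const_mul 2),
    lintegral_const_mul _ (hK i)]

theorem regDensity_congr {u u' : (𝔼 d) → ℝ} {x y : 𝔼 d} (hx : u x = u' x) (hy : u y = u' y) :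
    regDensity d M α wv u (x, y) = regDensity d M α wv u' (x, y) := by
  simp [regDensity, Set.indicator, hx, hy]

theorem Reg_le_liminf_of_ae_eventually_eq {w : ℕ → (𝔼 d) → ℝ} {w₀ : (𝔼 d) → ℝ}
    (hw : ∀ n, Measurable (w n)) (hw₀ : Measurable w₀)
    (h : ∀ᵐ x, ∀ᶠ n in atTop, w n x = w₀ x) :
    Reg d M α wv w₀ ≤ liminf (fun n => Reg d M α wv (w n)) atTop := by
  have hprod : ∀ᵐ p ∂(volume.prod volume : Measure ((𝔼 d) × 𝔼 d)),
      ∀ᶠ n in atTop, regDensity d M α wv (w n) p = regDensity d M α wv w₀ p := by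
    filter_upwards [Measure.quasiMeasurePreserving_fst.ae h,
      Measure.quasiMeasurePreserving_snd.ae h] with p h1 h2
    filter_upwards [h1, h2] with n hn1 hn2
    exact regDensity_congr hn1 hn2
  calc Reg d M α wv w₀ = ∫⁻ p, regDensity d M α wv w₀ p ∂volume.prod volume :=
        Reg_eq_lintegral_regDensity hw₀
    _ = ∫⁻ p, liminf (fun n => regDensity d M α wv (w n) p) atTop ∂volume.prod volume :=
        lintegral_congr_ae (hprod.mono fun p hp => ((liminf_congr hp).trans (liminf_const _)).symm)
    _ ≤ liminf (fun n => ∫⁻ p, regDensity d M α wv (w n) p ∂volume.prod volume) atTop :=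
        lintegral_liminf_le fun n => measurable_regDensity (hw n)
    _ = liminf (fun n => Reg d M α wv (w n)) atTop := by
        simp_rw [Reg_eq_lintegral_regDensity (hw _)]

theorem Reg_le_liminf_of_tendstoInMeasure {w : ℕ → (𝔼 d) → ℝ} {w₀ : (𝔼 d) → ℝ} {S : Set ℝ}
    (hS : S.Finite) (hw : ∀ n, Measurable (w n)) (hw₀ : Measurable w₀)
    (hwS : ∀ n, ∀ᵐ x, w n x ∈ S) (h : TendstoInMeasure volume w atTop w₀) :
    Reg d M α wv w₀ ≤ liminf (fun n => Reg d M α wv (w n)) atTop := by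
  refine le_liminf_of_forall_subseq fun φ hφ => ?_
  obtain ⟨ψ, hψ, hae⟩ :=
    (h.comp hφ.tendsto_atTop).exists_subseq_ae_eventually_eq hS fun n => hwS (φ n)
  exact ⟨ψ, hψ, Reg_le_liminf_of_ae_eventually_eq (fun n => hw _) hw₀ hae⟩

end FractionalPerimeter

namespace Feasible

variable {d M : ℕ} {Ω : Set (𝔼 d)} {wv : Fin M → ℤ} {w : (𝔼 d) → ℝ}

theorem ae_mem (hw : Feasible d M Ω wv w) :
    ∀ᵐ x, w x ∈ insert 0 (Set.range fun i => (wv i : ℝ)) := by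
  have hmeas : MeasurableSet {x | ∃ i, w x = wv i} := by
    rw [Set.ofPred_exists]
    exact MeasurableSet.iUnion fun i => hw.1 (measurableSet_singleton _)
  filter_upwards [(ae_restrict_iff hmeas).1 hw.2.2] with x hx
  by_cases hxΩ : x ∈ Ω
  · obtain ⟨i, hi⟩ := hx hxΩ
    exact Or.inr ⟨i, hi.symm⟩
  · exact Or.inl (hw.2.1 x hxΩ)

theorem ae_abs_le (hw : Feasible d M Ω wv w) : ∀ᵐ x, |w x| ≤ ∑ i, |(wv i : ℝ)| := by
  filter_upwards [hw.ae_mem] with x hx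
  rcases hx with h0 | ⟨i, hi⟩
  · rw [h0, abs_zero]
    positivity
  · rw [← hi]
    exact Finset.single_le_sum (f := fun j => |(wv j : ℝ)|) (fun j _ => abs_nonneg _)
      (Finset.mem_univ i)

theorem eLpNorm_top_le (hw : Feasible d M Ω wv w) :
    eLpNorm w ∞ volume ≤ ENNReal.ofReal (∑ i, |(wv i : ℝ)|) := by
  simpa using eLpNorm_le_of_ae_bound (p := ∞) hw.ae_abs_le

theorem memLp_two (hΩ : Bornology.IsBounded Ω) (hw : Feasible d M Ω wv w) : MemLp w 2 volume :=
  (memLp_top_of_bound hw.1.aestronglyMeasurable _ hw.ae_abs_le)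
    |>.mono_exponent_of_measure_support_ne_top hw.2.1 hΩ.measure_lt_top.ne le_top

theorem tendsto_eLpNorm_two {w : ℕ → (𝔼 d) → ℝ} {w₀ : (𝔼 d) → ℝ}
    (hw : ∀ n, Feasible d M Ω wv (w n)) (hw₀ : Feasible d M Ω wv w₀)
    (h : Tendsto (fun n => eLpNorm (w n - w₀) 1 volume) atTop (𝓝 0)) :
    Tendsto (fun n => eLpNorm (w n - w₀) 2 volume) atTop (𝓝 0) := by
  refine tendsto_eLpNorm_two_of_tendsto_eLpNorm_one
    (fun n => ((hw n).1.sub hw₀.1).aestronglyMeasurable)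
    (C := 2 * ENNReal.ofReal (∑ i, |(wv i : ℝ)|)) (by finiteness) (fun n => ?_) h
  calc eLpNorm (w n - w₀) ∞ volume ≤ eLpNorm (w n) ∞ volume + eLpNorm w₀ ∞ volume :=
        eLpNorm_sub_le (hw n).1.aestronglyMeasurable hw₀.1.aestronglyMeasurable le_top
    _ ≤ 2 * ENNReal.ofReal (∑ i, |(wv i : ℝ)|) := by
        rw [two_mul]
        exact add_le_add (hw n).eLpNorm_top_le hw₀.eLpNorm_top_le

end Feasible

theorem tr_subproblem_liminf_general (d M : ℕ) (α η Δ : ℝ)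
    (Ω : Set (EuclideanSpace ℝ (Fin d)))
    (hΩb : Bornology.IsBounded Ω)
    (wv : Fin M → ℤ)
    (vseq : ℕ → EuclideanSpace ℝ (Fin d) → ℝ) (vlim : EuclideanSpace ℝ (Fin d) → ℝ)
    (wseq : ℕ → EuclideanSpace ℝ (Fin d) → ℝ) (wlim : EuclideanSpace ℝ (Fin d) → ℝ)
    (hvfeas : ∀ n, Feasible d M Ω wv (vseq n)) (hvlim : Feasible d M Ω wv vlim)
    (hwfeas : ∀ n, Feasible d M Ω wv (wseq n)) (hwlim : Feasible d M Ω wv wlim)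
    (hvL1 : Tendsto (fun n => ∫⁻ x, ENNReal.ofReal |vseq n x - vlim x|) atTop (nhds 0))
    (hvR : Tendsto (fun n => Reg d M α wv (vseq n)) atTop (nhds (Reg d M α wv vlim)))
    (gseq : ℕ → EuclideanSpace ℝ (Fin d) → ℝ) (g : EuclideanSpace ℝ (Fin d) → ℝ)
    (hgn2 : ∀ n, MemLp (gseq n) 2 volume)
    (hweak : ∀ h : EuclideanSpace ℝ (Fin d) → ℝ, MemLp h 2 volume →
      Tendsto (fun n => ∫ x, gseq n x * h x) atTop (nhds (∫ x, g x * h x)))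
    (hwL1 : Tendsto (fun n => ∫⁻ x, ENNReal.ofReal |wseq n x - wlim x|) atTop (nhds 0))
    (hΔn : ∀ n, ∫⁻ x, ENNReal.ofReal |wseq n x - vseq n x| ≤ ENNReal.ofReal Δ) :
    (∫⁻ x, ENNReal.ofReal |wlim x - vlim x|) ≤ ENNReal.ofReal Δ ∧
    ((∫ x, g x * (wlim x - vlim x) : ℝ) : EReal)
        + ((ENNReal.ofReal η * Reg d M α wv wlim : ℝ≥0∞) : EReal)
        - ((ENNReal.ofReal η * Reg d M α wv vlim : ℝ≥0∞) : EReal)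
      ≤ liminf (fun n =>
          ((∫ x, gseq n x * (wseq n x - vseq n x) : ℝ) : EReal)
            + ((ENNReal.ofReal η * Reg d M α wv (wseq n) : ℝ≥0∞) : EReal)
            - ((ENNReal.ofReal η * Reg d M α wv (vseq n) : ℝ≥0∞) : EReal)) atTop := by
  simp only [lintegral_ofReal_abs_sub_eq_eLpNorm] at hvL1 hwL1 hΔn ⊢
  have hwm : ∀ n, AEStronglyMeasurable (wseq n) volume := fun n =>
    (hwfeas n).1.aestronglyMeasurable
  have hvm : ∀ n, AEStronglyMeasurable (vseq n) volume := fun n =>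
    (hvfeas n).1.aestronglyMeasurable
  refine ⟨eLpNorm_sub_le_of_tendsto le_rfl hwm hwlim.1.aestronglyMeasurable hvm
    hvlim.1.aestronglyMeasurable hwL1 hvL1 hΔn, ?_⟩
  have hpair : Tendsto (fun n => ∫ x, gseq n x * (wseq n x - vseq n x)) atTop
      (𝓝 (∫ x, g x * (wlim x - vlim x))) :=
    tendsto_integral_mul_of_weak_of_tendsto_eLpNorm (f := fun n => wseq n - vseq n) hgn2 hweak
      (fun n => ((hwfeas n).memLp_two hΩb).sub ((hvfeas n).memLp_two hΩb))
      ((hwlim.memLp_two hΩb).sub (hvlim.memLp_two hΩb))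
      (tendsto_eLpNorm_sub_sub one_le_two hwm hwlim.1.aestronglyMeasurable hvm
        hvlim.1.aestronglyMeasurable (Feasible.tendsto_eLpNorm_two hwfeas hwlim hwL1)
        (Feasible.tendsto_eLpNorm_two hvfeas hvlim hvL1))
  have hReg : Reg d M α wv wlim ≤ liminf (fun n => Reg d M α wv (wseq n)) atTop :=
    Reg_le_liminf_of_tendstoInMeasure ((Set.finite_range _).insert 0) (fun n => (hwfeas n).1)
      hwlim.1 (fun n => (hwfeas n).ae_mem)
      (tendstoInMeasure_of_tendsto_eLpNorm one_ne_zero hwm hwlim.1.aestronglyMeasurable hwL1)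
  refine EReal.le_liminf_add_sub hpair ?_
    (ENNReal.Tendsto.const_mul hvR (Or.inr ENNReal.ofReal_ne_top))
  rw [ENNReal.liminf_const_mul_of_ne_top ENNReal.ofReal_ne_top]
  gcongr

/-- The liminf part of the Γ-convergence of the trust-region functionals: strict convergence
`vⁿ → v`, weak `L²`-convergence `gⁿ ⇀ g`, `L¹`-convergence `wⁿ → w` with uniformly bounded
level-set fractional perimeters, and `‖wⁿ − vⁿ‖_{L¹} ≤ Δ` imply `‖w − v‖_{L¹} ≤ Δ` and the
liminf inequality for the functional values. -/
theorem tr_subproblem_liminf (d M : ℕ) (α η Δ : ℝ)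
    (hα : α ∈ Set.Ioo (0 : ℝ) 1) (hη : 0 < η) (hΔ : 0 < Δ)
    (Ω : Set (EuclideanSpace ℝ (Fin d))) (hΩm : MeasurableSet Ω)
    (hΩb : Bornology.IsBounded Ω)
    (wv : Fin M → ℤ) (hinj : Function.Injective wv)
    (vseq : ℕ → EuclideanSpace ℝ (Fin d) → ℝ) (vlim : EuclideanSpace ℝ (Fin d) → ℝ)
    (wseq : ℕ → EuclideanSpace ℝ (Fin d) → ℝ) (wlim : EuclideanSpace ℝ (Fin d) → ℝ)
    (hvfeas : ∀ n, Feasible d M Ω wv (vseq n)) (hvlim : Feasible d M Ω wv vlim)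
    (hwfeas : ∀ n, Feasible d M Ω wv (wseq n)) (hwlim : Feasible d M Ω wv wlim)
    (hvL1 : Tendsto (fun n => ∫⁻ x, ENNReal.ofReal |vseq n x - vlim x|) atTop (nhds 0))
    (hvR : Tendsto (fun n => Reg d M α wv (vseq n)) atTop (nhds (Reg d M α wv vlim)))
    (gseq : ℕ → EuclideanSpace ℝ (Fin d) → ℝ) (g : EuclideanSpace ℝ (Fin d) → ℝ)
    (hg2 : MemLp g 2 volume) (hgn2 : ∀ n, MemLp (gseq n) 2 volume)
    (hweak : ∀ h : EuclideanSpace ℝ (Fin d) → ℝ, MemLp h 2 volume →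
      Tendsto (fun n => ∫ x, gseq n x * h x) atTop (nhds (∫ x, g x * h x)))
    (hwL1 : Tendsto (fun n => ∫⁻ x, ENNReal.ofReal |wseq n x - wlim x|) atTop (nhds 0))
    (hwP : ∀ i, ∃ Cb : ℝ≥0∞, Cb < ⊤ ∧
      ∀ n, fracPer d α ((wseq n) ⁻¹' {(wv i : ℝ)}) ≤ Cb)
    (hΔn : ∀ n, ∫⁻ x, ENNReal.ofReal |wseq n x - vseq n x| ≤ ENNReal.ofReal Δ) :
    (∫⁻ x, ENNReal.ofReal |wlim x - vlim x|) ≤ ENNReal.ofReal Δ ∧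
    ((∫ x, g x * (wlim x - vlim x) : ℝ) : EReal)
        + ((ENNReal.ofReal η * Reg d M α wv wlim : ℝ≥0∞) : EReal)
        - ((ENNReal.ofReal η * Reg d M α wv vlim : ℝ≥0∞) : EReal)
      ≤ liminf (fun n =>
          ((∫ x, gseq n x * (wseq n x - vseq n x) : ℝ) : EReal)
            + ((ENNReal.ofReal η * Reg d M α wv (wseq n) : ℝ≥0∞) : EReal)
            - ((ENNReal.ofReal η * Reg d M α wv (vseq n) : ℝ≥0∞) : EReal)) atTop :=
  tr_subproblem_liminf_general d M α η Δ Ω hΩb wv vseq vlim wseq wlim hvfeas hvlim hwfeas hwlim hvL1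
    hvR gseq g hgn2 hweak hwL1 hΔn
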